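/- Let E be an oriented rank-3 real vector bundle over a closed oriented 4-manifold X. Then (1/6)·∫_{S(E)} (p₁(T S(E))·e(F_E) − e(F_E)³) = Sign(X). -/
import Mathlib

/-- Abstract form of: (1/6)·∫_{S(E)}(p₁(TS(E))·e(F_E) − e(F_E)³) = Sign X.  The hypotheses
record p₁(TS(E)) = ρ*p₁(TX) + e², e² = ρ*p₁(E), the projection formula
ρ!(ρ*x · e) = 2x, and the Hirzebruch signature theorem Sign X = (1/3)∫_X p₁(TX). -/
theorem chi1_eq_sign (HP HX : Type*) [CommRing HP] [CommRing HX]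
    (ρstar : HX →+* HP) (intP : HP →+ ℚ) (intX : HX →+ ℚ)
    (e pTS : HP) (p1TX p1E : HX) (sign : ℤ)
    (hpTS : pTS = ρstar p1TX + e ^ 2)
    (hsq : e ^ 2 = ρstar p1E)
    (hproj : ∀ x : HX, intP (ρstar x * e) = 2 * intX x)
    (hhirzebruch : (sign : ℚ) = intX p1TX / 3) :
    (1 / 6 : ℚ) * (intP (pTS * e) - intP (e ^ 3)) = sign := by
  have h3 : e ^ 3 = ρstar p1E * e := by rw [← hsq]; ring
  have h1 : pTS * e = ρstar p1TX * e + ρstar p1E * e := by rw [hpTS, hsq]; ring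
  rw [h1, h3, map_add, hproj, hproj, hhirzebruch]
  ring
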